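/- arXiv:1303.2352 — 7 statements merged into one kernel-verified Lean document; each statement's English description precedes it below -/
import Mathlib

section
/- Let R be a ring and suppose given a commutative diagram of R-modules with maps α₁ : A₁ → A₂, α₂ : A₂ → A₃, β₁ : B₁ → B₂, β₂ : B₂ → B₃, ι₁ : A₁ → B₁, ι₂ : A₂ → B₂, ι₃ : A₃ → B₃, π₂ : B₂ → T₂, π₃ : B₃ → T₃ and τ₂ : T₂ → T₃, such that the rows 0 → A₁ → A₂ → A₃ → 0 and 0 → B₁ → B₂ → B₃ → 0 are exact, the columns 0 → A₂ → B₂ → T₂ → 0 and 0 → A₃ → B₃ → T₃ → 0 are exact, and all squares commute (ι₂∘α₁ = β₁∘ι₁, ι₃∘α₂ = β₂∘ι₂, τ₂∘π₂ = π₃∘β₂). Assume τ₂ is an isomorphism. Then the following are equivalent: (i) α₂ and π₂ both admit R-linear sections; (ii) β₂ and π₃ both admit R-linear sections. (Lemma 3.1 of the paper.) -/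
/-- **Lemma 3.1.** Given a commutative diagram of `R`-modules with exact rows
`0 → A₁ → A₂ → A₃ → 0` and `0 → B₁ → B₂ → B₃ → 0`, exact columns
`0 → A₂ → B₂ → T₂ → 0` and `0 → A₃ → B₃ → T₃ → 0`, commuting squares, and `τ₂`
an isomorphism, the following are equivalent: (i) `α₂` and `π₂` split;
(ii) `β₂` and `π₃` split. -/
theorem splitting_equivalence_lemma_3_1
    {R : Type*} [Ring R]
    {A₁ A₂ A₃ B₁ B₂ B₃ T₂ T₃ : Type*}
    [AddCommGroup A₁] [AddCommGroup A₂] [AddCommGroup A₃]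
    [AddCommGroup B₁] [AddCommGroup B₂] [AddCommGroup B₃]
    [AddCommGroup T₂] [AddCommGroup T₃]
    [Module R A₁] [Module R A₂] [Module R A₃]
    [Module R B₁] [Module R B₂] [Module R B₃]
    [Module R T₂] [Module R T₃]
    (α₁ : A₁ →ₗ[R] A₂) (α₂ : A₂ →ₗ[R] A₃)
    (β₁ : B₁ →ₗ[R] B₂) (β₂ : B₂ →ₗ[R] B₃)
    (ι₁ : A₁ →ₗ[R] B₁) (ι₂ : A₂ →ₗ[R] B₂) (ι₃ : A₃ →ₗ[R] B₃)
    (π₂ : B₂ →ₗ[R] T₂) (π₃ : B₃ →ₗ[R] T₃) (τ₂ : T₂ →ₗ[R] T₃)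
    -- exactness of the row 0 → A₁ → A₂ → A₃ → 0
    (hα₁ : Function.Injective α₁)
    (hrowA : LinearMap.range α₁ = LinearMap.ker α₂)
    (hα₂ : Function.Surjective α₂)
    -- exactness of the row 0 → B₁ → B₂ → B₃ → 0
    (hβ₁ : Function.Injective β₁)
    (hrowB : LinearMap.range β₁ = LinearMap.ker β₂)
    (hβ₂ : Function.Surjective β₂)
    -- exactness of the column 0 → A₂ → B₂ → T₂ → 0
    (hι₂ : Function.Injective ι₂)
    (hcol2 : LinearMap.range ι₂ = LinearMap.ker π₂)
    (hπ₂ : Function.Surjective π₂)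
    -- exactness of the column 0 → A₃ → B₃ → T₃ → 0
    (hι₃ : Function.Injective ι₃)
    (hcol3 : LinearMap.range ι₃ = LinearMap.ker π₃)
    (hπ₃ : Function.Surjective π₃)
    -- commuting squares
    (hsq1 : ι₂ ∘ₗ α₁ = β₁ ∘ₗ ι₁)
    (hsq2 : ι₃ ∘ₗ α₂ = β₂ ∘ₗ ι₂)
    (hsq3 : τ₂ ∘ₗ π₂ = π₃ ∘ₗ β₂)
    -- τ₂ is an isomorphism
    (hτ₂ : Function.Bijective τ₂) :
    ((∃ s : A₃ →ₗ[R] A₂, α₂ ∘ₗ s = LinearMap.id) ∧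
      (∃ t : T₂ →ₗ[R] B₂, π₂ ∘ₗ t = LinearMap.id)) ↔
    ((∃ s : B₃ →ₗ[R] B₂, β₂ ∘ₗ s = LinearMap.id) ∧
      (∃ t : T₃ →ₗ[R] B₃, π₃ ∘ₗ t = LinearMap.id)) := by

  set τ : T₂ ≃ₗ[R] T₃ := LinearEquiv.ofBijective τ₂ hτ₂ with hτ
  have hτapp : ∀ x, τ₂ x = τ x := fun x => rfl
  constructor
  · rintro ⟨⟨s, hs⟩, ⟨t, ht⟩⟩
    have hsapp : ∀ a, α₂ (s a) = a := fun a => congrFun (congrArg DFunLike.coe hs) a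
    have htapp : ∀ x, π₂ (t x) = x := fun x => congrFun (congrArg DFunLike.coe ht) x
    -- section of π₃
    have hπ₃sec : ∀ b : B₃, π₃ (β₂ (t (τ.symm (π₃ b)))) = π₃ b := by
      intro b
      have := congrFun (congrArg DFunLike.coe hsq3) (t (τ.symm (π₃ b)))
      simp only [LinearMap.coe_comp, Function.comp_apply] at this
      rw [← this, htapp, hτapp, τ.apply_symm_apply]
    -- the correction map q : B₃ →ₗ A₃
    have hmem : ∀ b : B₃, b - β₂ (t (τ.symm (π₃ b))) ∈ LinearMap.range ι₃ := by
      intro b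
      rw [hcol3, LinearMap.mem_ker, map_sub, hπ₃sec, sub_self]
    let p : B₃ →ₗ[R] B₃ := LinearMap.id - β₂ ∘ₗ t ∘ₗ (τ.symm : T₃ →ₗ[R] T₂) ∘ₗ π₃
    have hp : ∀ b, p b = b - β₂ (t (τ.symm (π₃ b))) := fun b => rfl
    let e₃ := LinearEquiv.ofInjective ι₃ hι₃
    let q : B₃ →ₗ[R] A₃ :=
      (e₃.symm : LinearMap.range ι₃ →ₗ[R] A₃) ∘ₗ
        (p.codRestrict (LinearMap.range ι₃) (fun b => by rw [hp]; exact hmem b))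
    have hq : ∀ b, ι₃ (q b) = b - β₂ (t (τ.symm (π₃ b))) := by
      intro b
      have : ι₃ (q b) = (e₃ (e₃.symm ⟨p b, hmem b⟩) : B₃) := rfl
      rw [this, e₃.apply_symm_apply]; exact hp b
    refine ⟨⟨ι₂ ∘ₗ s ∘ₗ q + t ∘ₗ (τ.symm : T₃ →ₗ[R] T₂) ∘ₗ π₃, ?_⟩,
      ⟨β₂ ∘ₗ t ∘ₗ (τ.symm : T₃ →ₗ[R] T₂), ?_⟩⟩
    · ext b
      have hcomm2 : ∀ a, ι₃ (α₂ a) = β₂ (ι₂ a) := fun a =>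
        congrFun (congrArg DFunLike.coe hsq2) a
      simp only [LinearMap.coe_comp, LinearEquiv.coe_coe, Function.comp_apply,
        LinearMap.add_apply, LinearMap.id_apply, map_add]
      rw [← hcomm2, hsapp, hq]
      abel
    · ext x
      simp only [LinearMap.coe_comp, LinearEquiv.coe_coe, Function.comp_apply,
        LinearMap.id_apply]
      have := congrFun (congrArg DFunLike.coe hsq3) (t (τ.symm x))
      simp only [LinearMap.coe_comp, Function.comp_apply] at this
      rw [← this, htapp, hτapp, τ.apply_symm_apply]
  · rintro ⟨⟨s, hs⟩, ⟨t, ht⟩⟩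
    have hsapp : ∀ b, β₂ (s b) = b := fun b => congrFun (congrArg DFunLike.coe hs) b
    have htapp : ∀ x, π₃ (t x) = x := fun x => congrFun (congrArg DFunLike.coe ht) x
    have hcomm2 : ∀ a, ι₃ (α₂ a) = β₂ (ι₂ a) := fun a =>
      congrFun (congrArg DFunLike.coe hsq2) a
    have hcomm3 : ∀ b, τ₂ (π₂ b) = π₃ (β₂ b) := fun b =>
      congrFun (congrArg DFunLike.coe hsq3) b
    -- section of α₂
    have hmem : ∀ a : A₃, s (ι₃ a) ∈ LinearMap.range ι₂ := by
      intro a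
      rw [hcol2, LinearMap.mem_ker]
      have h1 : τ₂ (π₂ (s (ι₃ a))) = 0 := by
        rw [hcomm3, hsapp]
        have : ι₃ a ∈ LinearMap.ker π₃ := by
          rw [← hcol3]; exact ⟨a, rfl⟩
        exact this
      exact hτ₂.injective (by rw [h1, map_zero])
    let e₂ := LinearEquiv.ofInjective ι₂ hι₂
    let r : A₃ →ₗ[R] A₂ :=
      (e₂.symm : LinearMap.range ι₂ →ₗ[R] A₂) ∘ₗ
        ((s ∘ₗ ι₃).codRestrict (LinearMap.range ι₂) hmem)
    have hr : ∀ a, ι₂ (r a) = s (ι₃ a) := by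
      intro a
      have : ι₂ (r a) = (e₂ (e₂.symm ⟨s (ι₃ a), hmem a⟩) : B₂) := rfl
      rw [this, e₂.apply_symm_apply]
    refine ⟨⟨r, ?_⟩, ⟨s ∘ₗ t ∘ₗ (τ : T₂ →ₗ[R] T₃), ?_⟩⟩
    · ext a
      simp only [LinearMap.coe_comp, Function.comp_apply, LinearMap.id_apply]
      apply hι₃
      rw [hcomm2, hr, hsapp]
    · ext x
      simp only [LinearMap.coe_comp, Function.comp_apply, LinearMap.id_apply]
      apply hτ₂.injective
      rw [hcomm3, hsapp]
      show π₃ (t (τ x)) = τ x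
      rw [htapp]
end

section
/- Let R be a ring and suppose given a commutative diagram of R-modules as in Lemma 3.1: maps α₁ : A₁ → A₂, α₂ : A₂ → A₃, β₁ : B₁ → B₂, β₂ : B₂ → B₃, ι₁ : A₁ → B₁, ι₂ : A₂ → B₂, ι₃ : A₃ → B₃, π₂ : B₂ → T₂, π₃ : B₃ → T₃, τ₂ : T₂ → T₃, with exact rows 0 → A₁ → A₂ → A₃ → 0 and 0 → B₁ → B₂ → B₃ → 0, exact columns 0 → A₂ → B₂ → T₂ → 0 and 0 → A₃ → B₃ → T₃ → 0, all squares commuting, and τ₂ an isomorphism. Assume moreover that α₂ admits an R-linear section. Then π₂ admits an R-linear section if and only if both β₂ and π₃ admit R-linear sections. (This is the purely module-theoretic splitting equivalence underlying Proposition 3.2 of the paper.) -/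
/-- Factor a linear map through an injective linear map containing its range. -/
lemma factor_through_injective {R M N P : Type*} [Ring R]
    [AddCommGroup M] [AddCommGroup N] [AddCommGroup P]
    [Module R M] [Module R N] [Module R P]
    (ι : P →ₗ[R] N) (hι : Function.Injective ι) (g : M →ₗ[R] N)
    (h : LinearMap.range g ≤ LinearMap.range ι) :
    ∃ q : M →ₗ[R] P, ι ∘ₗ q = g := by
  let e := LinearEquiv.ofInjective ι hι
  refine ⟨e.symm.toLinearMap ∘ₗ g.codRestrict (LinearMap.range ι)
      (fun x => h ⟨x, rfl⟩), ?_⟩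
  ext x
  exact congrArg Subtype.val (e.apply_symm_apply ⟨g x, h ⟨x, rfl⟩⟩)

/-- **(Module-theoretic core of Proposition 3.2.)** In the diagram of Lemma 3.1,
if moreover `α₂` admits an `R`-linear section, then `π₂` admits an `R`-linear
section if and only if both `β₂` and `π₃` admit `R`-linear sections. -/
theorem splitting_equivalence_prop_3_2
    {R : Type*} [Ring R]
    {A₁ A₂ A₃ B₁ B₂ B₃ T₂ T₃ : Type*}
    [AddCommGroup A₁] [AddCommGroup A₂] [AddCommGroup A₃]
    [AddCommGroup B₁] [AddCommGroup B₂] [AddCommGroup B₃]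
    [AddCommGroup T₂] [AddCommGroup T₃]
    [Module R A₁] [Module R A₂] [Module R A₃]
    [Module R B₁] [Module R B₂] [Module R B₃]
    [Module R T₂] [Module R T₃]
    (α₁ : A₁ →ₗ[R] A₂) (α₂ : A₂ →ₗ[R] A₃)
    (β₁ : B₁ →ₗ[R] B₂) (β₂ : B₂ →ₗ[R] B₃)
    (ι₁ : A₁ →ₗ[R] B₁) (ι₂ : A₂ →ₗ[R] B₂) (ι₃ : A₃ →ₗ[R] B₃)
    (π₂ : B₂ →ₗ[R] T₂) (π₃ : B₃ →ₗ[R] T₃) (τ₂ : T₂ →ₗ[R] T₃)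
    -- exactness of the row 0 → A₁ → A₂ → A₃ → 0
    (hα₁ : Function.Injective α₁)
    (hrowA : LinearMap.range α₁ = LinearMap.ker α₂)
    (hα₂ : Function.Surjective α₂)
    -- exactness of the row 0 → B₁ → B₂ → B₃ → 0
    (hβ₁ : Function.Injective β₁)
    (hrowB : LinearMap.range β₁ = LinearMap.ker β₂)
    (hβ₂ : Function.Surjective β₂)
    -- exactness of the column 0 → A₂ → B₂ → T₂ → 0
    (hι₂ : Function.Injective ι₂)
    (hcol2 : LinearMap.range ι₂ = LinearMap.ker π₂)
    (hπ₂ : Function.Surjective π₂)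
    -- exactness of the column 0 → A₃ → B₃ → T₃ → 0
    (hι₃ : Function.Injective ι₃)
    (hcol3 : LinearMap.range ι₃ = LinearMap.ker π₃)
    (hπ₃ : Function.Surjective π₃)
    -- commuting squares
    (hsq1 : ι₂ ∘ₗ α₁ = β₁ ∘ₗ ι₁)
    (hsq2 : ι₃ ∘ₗ α₂ = β₂ ∘ₗ ι₂)
    (hsq3 : τ₂ ∘ₗ π₂ = π₃ ∘ₗ β₂)
    -- τ₂ is an isomorphism
    (hτ₂ : Function.Bijective τ₂)
    -- α₂ admits an R-linear section
    (hsecα₂ : ∃ s : A₃ →ₗ[R] A₂, α₂ ∘ₗ s = LinearMap.id) :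
    (∃ t : T₂ →ₗ[R] B₂, π₂ ∘ₗ t = LinearMap.id) ↔
    ((∃ s : B₃ →ₗ[R] B₂, β₂ ∘ₗ s = LinearMap.id) ∧
      (∃ t : T₃ →ₗ[R] B₃, π₃ ∘ₗ t = LinearMap.id)) := by
  set e := LinearEquiv.ofBijective τ₂ hτ₂ with he
  have heτ : ∀ x, e x = τ₂ x := fun _ => rfl
  constructor
  · rintro ⟨t, ht⟩
    obtain ⟨sα, hsα⟩ := hsecα₂
    have ht' : ∀ x, π₂ (t x) = x := fun x => LinearMap.congr_fun ht x
    have hsα' : ∀ x, α₂ (sα x) = x := fun x => LinearMap.congr_fun hsα x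
    have hsq3' : ∀ b, τ₂ (π₂ b) = π₃ (β₂ b) :=
      fun b => LinearMap.congr_fun hsq3 b
    have hsq2' : ∀ a, ι₃ (α₂ a) = β₂ (ι₂ a) :=
      fun a => LinearMap.congr_fun hsq2 a
    -- section of π₃
    set t₃ : T₃ →ₗ[R] B₃ := β₂ ∘ₗ t ∘ₗ e.symm.toLinearMap with ht₃def
    have ht₃ : ∀ x, π₃ (t₃ x) = x := by
      intro x
      have h1 : π₃ (β₂ (t (e.symm x))) = τ₂ (π₂ (t (e.symm x))) :=
        (hsq3' _).symm
      have h2 : τ₂ (e.symm x) = x := by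
        rw [← heτ]; exact e.apply_symm_apply x
      simpa [ht₃def, ht' (e.symm x), h2] using h1
    have ht₃c : π₃ ∘ₗ t₃ = LinearMap.id := by ext x; exact ht₃ x
    refine ⟨?_, ⟨t₃, ht₃c⟩⟩
    -- section of β₂
    obtain ⟨q₃, hq₃⟩ := factor_through_injective ι₃ hι₃
      (LinearMap.id - t₃ ∘ₗ π₃) (by
        rintro _ ⟨b, rfl⟩
        rw [hcol3]
        simp [ht₃ (π₃ b)])
    have hq₃' : ∀ b, ι₃ (q₃ b) = b - t₃ (π₃ b) :=
      fun b => LinearMap.congr_fun hq₃ b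
    refine ⟨ι₂ ∘ₗ sα ∘ₗ q₃ + t ∘ₗ e.symm.toLinearMap ∘ₗ π₃, ?_⟩
    ext b
    have h1 : β₂ (ι₂ (sα (q₃ b))) = ι₃ (q₃ b) := by
      rw [← hsq2', hsα']
    simp only [LinearMap.coe_comp, Function.comp_apply, LinearMap.add_apply,
      LinearMap.id_coe, id_eq, map_add, LinearEquiv.coe_coe]
    rw [h1, hq₃']
    have : β₂ (t (e.symm (π₃ b))) = t₃ (π₃ b) := rfl
    rw [this]
    abel
  · rintro ⟨⟨s, hs⟩, ⟨t₃, ht₃⟩⟩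
    refine ⟨s ∘ₗ t₃ ∘ₗ e.toLinearMap, ?_⟩
    ext x
    have hs' : ∀ y, β₂ (s y) = y := fun y => LinearMap.congr_fun hs y
    have ht₃' : ∀ y, π₃ (t₃ y) = y := fun y => LinearMap.congr_fun ht₃ y
    have hsq3' : ∀ b, τ₂ (π₂ b) = π₃ (β₂ b) :=
      fun b => LinearMap.congr_fun hsq3 b
    apply hτ₂.injective
    simp only [LinearMap.coe_comp, Function.comp_apply, LinearEquiv.coe_coe,
      LinearMap.id_coe, id_eq]
    rw [hsq3', hs', ht₃', heτ]
end

section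
/- Let R be a ring and suppose given R-modules T, A₂, A₃, B₂, B₃ with R-linear maps forming two exact rows 0 → T → A₂ →^φ A₃ → 0 and 0 → T → B₂ →^ψ B₃ → 0 (with the same first term T), together with injective R-linear maps ι₂ : A₂ → B₂ and ι₃ : A₃ → B₃ such that the resulting diagram commutes, where the left vertical map is the identity of T (i.e. the composite T → A₂ → B₂ equals T → B₂, and ψ ∘ ι₂ = ι₃ ∘ φ). If the surjection ψ : B₂ → B₃ admits an R-linear section and the injection ι₃ admits an R-linear retraction, then the injection ι₂ admits an R-linear retraction. (This is the module-theoretic content of Proposition 3.4 of the paper, combined there with the descent diagram of Theorem 2.1.) -/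
/-!
The split bottom row gives a retraction `q` of `b`, so `q ∘ ι₂` retracts `a` and the top row
splits: there is `τ : A₃ → A₂` with `τ ∘ φ = id - a ∘ q ∘ ι₂`. With `r₃` a retraction of `ι₃`,
the map `a ∘ q + τ ∘ r₃ ∘ ψ` retracts `ι₂`, because `r₃ ∘ ψ ∘ ι₂ = r₃ ∘ ι₃ ∘ φ = φ`.
-/

open LinearMap

section

variable {R M N P : Type*} [Ring R] [AddCommGroup M] [AddCommGroup N] [AddCommGroup P]
  [Module R M] [Module R N] [Module R P]

theorem LinearMap.exists_comp_eq_of_surjective_of_ker_le {f : M →ₗ[R] N} {g : M →ₗ[R] P}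
    (hf : Function.Surjective f) (h : ker f ≤ ker g) : ∃ τ : N →ₗ[R] P, τ ∘ₗ f = g :=
  ⟨(ker f).liftQ g h ∘ₗ (f.quotKerEquivOfSurjective hf).symm.toLinearMap, by
    ext x
    simp [show (f.quotKerEquivOfSurjective hf).symm (f x) = (ker f).mkQ x from
      (LinearEquiv.symm_apply_eq _).mpr rfl]⟩

theorem LinearMap.exists_comp_eq_id_sub_of_retraction {f : M →ₗ[R] N} {g : N →ₗ[R] P}
    (hfg : ker g ≤ range f) (hg : Function.Surjective g) {p : N →ₗ[R] M} (hp : p ∘ₗ f = .id) :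
    ∃ τ : P →ₗ[R] N, τ ∘ₗ g = .id - f ∘ₗ p := by
  refine exists_comp_eq_of_surjective_of_ker_le hg fun x hx ↦ ?_
  obtain ⟨m, rfl⟩ := hfg hx
  simp [← comp_apply p f, hp]

end

theorem retraction_from_descent_prop_3_4_general
    {R : Type*} [Ring R]
    {T A₂ A₃ B₂ B₃ : Type*}
    [AddCommGroup T] [AddCommGroup A₂] [AddCommGroup A₃]
    [AddCommGroup B₂] [AddCommGroup B₃]
    [Module R T] [Module R A₂] [Module R A₃] [Module R B₂] [Module R B₃]
    (a : T →ₗ[R] A₂) (φ : A₂ →ₗ[R] A₃)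
    (b : T →ₗ[R] B₂) (ψ : B₂ →ₗ[R] B₃)
    (ι₂ : A₂ →ₗ[R] B₂) (ι₃ : A₃ →ₗ[R] B₃)
    -- exactness of the row 0 → T → A₂ → A₃ → 0
    (hrowA : LinearMap.range a = LinearMap.ker φ)
    (hφ : Function.Surjective φ)
    -- exactness of the row 0 → T → B₂ → B₃ → 0
    (hb : Function.Injective b)
    (hrowB : LinearMap.range b = LinearMap.ker ψ)
    -- commutativity: the left vertical map is the identity of T
    (hsq1 : ι₂ ∘ₗ a = b)
    (hsq2 : ψ ∘ₗ ι₂ = ι₃ ∘ₗ φ)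
    -- ψ admits a section, ι₃ admits a retraction
    (hsec : ∃ s : B₃ →ₗ[R] B₂, ψ ∘ₗ s = LinearMap.id)
    (hret : ∃ r : B₃ →ₗ[R] A₃, r ∘ₗ ι₃ = LinearMap.id) :
    ∃ r : B₂ →ₗ[R] A₂, r ∘ₗ ι₂ = LinearMap.id := by
  have hsplitB := (exact_iff.mpr hrowB.symm).split_tfae'.out 0 1
  obtain ⟨-, q, hq⟩ := hsplitB.mp ⟨hb, hsec⟩
  have hqa : (q ∘ₗ ι₂) ∘ₗ a = .id := by rw [comp_assoc, hsq1, hq]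
  obtain ⟨τ, hτ⟩ := exists_comp_eq_id_sub_of_retraction hrowA.ge hφ hqa
  obtain ⟨r₃, hr₃⟩ := hret
  refine ⟨a ∘ₗ q + τ ∘ₗ r₃ ∘ₗ ψ, ?_⟩
  calc (a ∘ₗ q + τ ∘ₗ r₃ ∘ₗ ψ) ∘ₗ ι₂ = a ∘ₗ q ∘ₗ ι₂ + τ ∘ₗ (r₃ ∘ₗ ι₃) ∘ₗ φ := by
        simp only [add_comp, comp_assoc, hsq2]
    _ = .id := by rw [hr₃, id_comp, hτ, add_sub_cancel]

/-- **(Module-theoretic content of Proposition 3.4.)** Given two exact rows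
`0 → T → A₂ →^φ A₃ → 0` and `0 → T → B₂ →^ψ B₃ → 0` with the same first term `T`,
injective maps `ι₂ : A₂ → B₂` and `ι₃ : A₃ → B₃` making the diagram commute
(the left vertical map being the identity of `T`), if `ψ` admits an `R`-linear
section and `ι₃` admits an `R`-linear retraction, then `ι₂` admits an
`R`-linear retraction. -/
theorem retraction_from_descent_prop_3_4
    {R : Type*} [Ring R]
    {T A₂ A₃ B₂ B₃ : Type*}
    [AddCommGroup T] [AddCommGroup A₂] [AddCommGroup A₃]
    [AddCommGroup B₂] [AddCommGroup B₃]
    [Module R T] [Module R A₂] [Module R A₃] [Module R B₂] [Module R B₃]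
    (a : T →ₗ[R] A₂) (φ : A₂ →ₗ[R] A₃)
    (b : T →ₗ[R] B₂) (ψ : B₂ →ₗ[R] B₃)
    (ι₂ : A₂ →ₗ[R] B₂) (ι₃ : A₃ →ₗ[R] B₃)
    -- exactness of the row 0 → T → A₂ → A₃ → 0
    (ha : Function.Injective a)
    (hrowA : LinearMap.range a = LinearMap.ker φ)
    (hφ : Function.Surjective φ)
    -- exactness of the row 0 → T → B₂ → B₃ → 0
    (hb : Function.Injective b)
    (hrowB : LinearMap.range b = LinearMap.ker ψ)
    (hψ : Function.Surjective ψ)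
    -- ι₂, ι₃ are injective
    (hι₂ : Function.Injective ι₂)
    (hι₃ : Function.Injective ι₃)
    -- commutativity: the left vertical map is the identity of T
    (hsq1 : ι₂ ∘ₗ a = b)
    (hsq2 : ψ ∘ₗ ι₂ = ι₃ ∘ₗ φ)
    -- ψ admits a section, ι₃ admits a retraction
    (hsec : ∃ s : B₃ →ₗ[R] B₂, ψ ∘ₗ s = LinearMap.id)
    (hret : ∃ r : B₃ →ₗ[R] A₃, r ∘ₗ ι₃ = LinearMap.id) :
    ∃ r : B₂ →ₗ[R] A₂, r ∘ₗ ι₂ = LinearMap.id :=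
  retraction_from_descent_prop_3_4_general a φ b ψ ι₂ ι₃ hrowA hφ hb hrowB hsq1 hsq2 hsec hret
end

section
/- Let R be a commutative ring and let 0 → M₁ →^ι M₂ →^π M₃ → 0 be an exact sequence of R-modules equipped with R-linear automorphisms γ₁, γ₂, γ₃ of M₁, M₂, M₃ respectively, satisfying ι ∘ γ₁ = γ₂ ∘ ι and π ∘ γ₂ = γ₃ ∘ π. Assume that π admits an R-linear section. For k = 1, 2 let T_k be the R-linear endomorphism of Hom_R(M₃, M_k) defined by T_k(f) = γ_k ∘ f ∘ γ₃⁻¹, and let Hom_R(M₃, M_k)_γ denote the coinvariants Hom_R(M₃, M_k)/im(T_k − id). Then π admits an R-linear section s satisfying s ∘ γ₃ = γ₂ ∘ s (i.e. the sequence splits equivariantly) if and only if the map Hom_R(M₃, M₁)_γ → Hom_R(M₃, M₂)_γ induced by f ↦ ι ∘ f is injective. (This is the algebraic form of Lemma 4.2 of the paper, with the procyclic group Γ replaced by a single topological generator γ.) -/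
set_option linter.unnecessarySimpa false

private lemma factor_aux
    {R : Type*} [CommRing R]
    {M₁ M₂ M₃ : Type*}
    [AddCommGroup M₁] [AddCommGroup M₂] [AddCommGroup M₃]
    [Module R M₁] [Module R M₂] [Module R M₃]
    (ι : M₁ →ₗ[R] M₂) (π : M₂ →ₗ[R] M₃)
    (hι : Function.Injective ι)
    (hexact : LinearMap.range ι = LinearMap.ker π)
    (D : M₃ →ₗ[R] M₂) (hD : ∀ x, π (D x) = 0) :
    ∃ d : M₃ →ₗ[R] M₁, ∀ x, ι (d x) = D x := by
  have hmem : ∀ x, D x ∈ LinearMap.range ι := fun x => by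
    rw [hexact, LinearMap.mem_ker]; exact hD x
  let e := LinearEquiv.ofInjective ι hι
  refine ⟨e.symm.toLinearMap ∘ₗ D.codRestrict _ hmem, fun x => ?_⟩
  have : (e (e.symm ⟨D x, hmem x⟩) : M₂) = D x := by
    rw [e.apply_symm_apply]
  simpa [e, LinearEquiv.ofInjective_apply] using this

/-- **(Algebraic form of Lemma 4.2.)** Let `0 → M₁ →^ι M₂ →^π M₃ → 0` be an exact
sequence of `R`-modules equipped with compatible automorphisms `γ₁, γ₂, γ₃`, and
assume `π` admits an `R`-linear section. Then `π` admits a `γ`-equivariant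
`R`-linear section if and only if the map
`Hom_R(M₃, M₁)_γ → Hom_R(M₃, M₂)_γ` on coinvariants (quotients by the image of
`T_k − id`, where `T_k f = γ_k ∘ f ∘ γ₃⁻¹`) induced by `f ↦ ι ∘ f` is injective;
the latter injectivity is expressed elementwise: whenever `ι ∘ f` lies in the
image of `T₂ − id`, already `f` lies in the image of `T₁ − id`. -/
theorem equivariant_splitting_lemma_4_2
    {R : Type*} [CommRing R]
    {M₁ M₂ M₃ : Type*}
    [AddCommGroup M₁] [AddCommGroup M₂] [AddCommGroup M₃]
    [Module R M₁] [Module R M₂] [Module R M₃]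
    (ι : M₁ →ₗ[R] M₂) (π : M₂ →ₗ[R] M₃)
    (γ₁ : M₁ ≃ₗ[R] M₁) (γ₂ : M₂ ≃ₗ[R] M₂) (γ₃ : M₃ ≃ₗ[R] M₃)
    -- exactness of 0 → M₁ → M₂ → M₃ → 0
    (hι : Function.Injective ι)
    (hexact : LinearMap.range ι = LinearMap.ker π)
    (hπ : Function.Surjective π)
    -- compatibility of the automorphisms
    (hcomm₁ : ι ∘ₗ (γ₁ : M₁ →ₗ[R] M₁) = (γ₂ : M₂ →ₗ[R] M₂) ∘ₗ ι)
    (hcomm₂ : π ∘ₗ (γ₂ : M₂ →ₗ[R] M₂) = (γ₃ : M₃ →ₗ[R] M₃) ∘ₗ π)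
    -- π admits an R-linear section
    (hsec : ∃ s : M₃ →ₗ[R] M₂, π ∘ₗ s = LinearMap.id) :
    (∃ s : M₃ →ₗ[R] M₂, π ∘ₗ s = LinearMap.id ∧
        s ∘ₗ (γ₃ : M₃ →ₗ[R] M₃) = (γ₂ : M₂ →ₗ[R] M₂) ∘ₗ s) ↔
    (∀ f : M₃ →ₗ[R] M₁,
        (∃ g : M₃ →ₗ[R] M₂,
          ι ∘ₗ f = (γ₂ : M₂ →ₗ[R] M₂) ∘ₗ g ∘ₗ (γ₃.symm : M₃ →ₗ[R] M₃) - g) →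
        (∃ h : M₃ →ₗ[R] M₁,
          f = (γ₁ : M₁ →ₗ[R] M₁) ∘ₗ h ∘ₗ (γ₃.symm : M₃ →ₗ[R] M₃) - h)) := by
  have hπγ : ∀ x, π (γ₂ x) = γ₃ (π x) := fun x => LinearMap.congr_fun hcomm₂ x
  have hιγ : ∀ x, ι (γ₁ x) = γ₂ (ι x) := fun x => LinearMap.congr_fun hcomm₁ x
  have hπι : ∀ x, π (ι x) = 0 := fun x => by
    have : ι x ∈ LinearMap.ker π := hexact ▸ LinearMap.mem_range_self ι x
    exact this
  constructor
  · rintro ⟨s, hs, hseq⟩ f ⟨g, hg⟩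
    have hsx : ∀ x, π (s x) = x := fun x => LinearMap.congr_fun hs x
    have hseqx : ∀ x, s (γ₃ x) = γ₂ (s x) := fun x => LinearMap.congr_fun hseq x
    have hgx : ∀ y, ι (f y) = γ₂ (g (γ₃.symm y)) - g y :=
      fun y => LinearMap.congr_fun hg y
    -- p := π ∘ g commutes with γ₃
    have hpcomm : ∀ y, γ₃ (π (g (γ₃.symm y))) = π (g y) := by
      intro y
      have h0 : (0 : M₃) = π (γ₂ (g (γ₃.symm y)) - g y) := by
        rw [← hgx y, hπι]
      rw [map_sub, hπγ] at h0
      exact (sub_eq_zero.mp h0.symm)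
    -- g' := g - s ∘ (π ∘ g) kills π
    obtain ⟨h, hh⟩ := factor_aux ι π hι hexact (g - s ∘ₗ π ∘ₗ g)
      (fun y => by simp [map_sub, hsx])
    refine ⟨h, LinearMap.ext fun y => ?_⟩
    have e1 : ι (γ₁ (h (γ₃.symm y)) - h y)
        = γ₂ (g (γ₃.symm y) - s (π (g (γ₃.symm y)))) - (g y - s (π (g y))) := by
      rw [map_sub, hιγ, hh, hh]
      simp [LinearMap.sub_apply, LinearMap.comp_apply]
    have e2 : γ₂ (s (π (g (γ₃.symm y)))) = s (π (g y)) := by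
      rw [← hseqx, hpcomm]
    have e3 : ι (γ₁ (h (γ₃.symm y)) - h y) = ι (f y) := by
      rw [e1, hgx y, map_sub, e2]; abel
    have := hι e3
    simp only [LinearMap.sub_apply, LinearMap.comp_apply, LinearEquiv.coe_coe]
    rw [← this]
  · rintro hinj
    obtain ⟨s₀, hs₀⟩ := hsec
    have hs₀x : ∀ x, π (s₀ x) = x := fun x => LinearMap.congr_fun hs₀ x
    set D : M₃ →ₗ[R] M₂ :=
      (γ₂ : M₂ →ₗ[R] M₂) ∘ₗ s₀ ∘ₗ (γ₃.symm : M₃ →ₗ[R] M₃) - s₀ with hDdef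
    have hDπ : ∀ x, π (D x) = 0 := by
      intro x
      simp only [hDdef, LinearMap.sub_apply, LinearMap.comp_apply, LinearEquiv.coe_coe,
        map_sub, hπγ, hs₀x]
      simp
    obtain ⟨d, hd⟩ := factor_aux ι π hι hexact D hDπ
    obtain ⟨h, hh⟩ := hinj d ⟨s₀, LinearMap.ext fun y => by
      rw [LinearMap.comp_apply, hd]⟩
    have hhx : ∀ y, d y = γ₁ (h (γ₃.symm y)) - h y := fun y => LinearMap.congr_fun hh y
    refine ⟨s₀ - ι ∘ₗ h, ?_, ?_⟩
    · ext y
      simp [LinearMap.sub_apply, LinearMap.comp_apply, hs₀x, hπι]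
    · ext y
      -- goal: s₀ (γ₃ y) - ι (h (γ₃ y)) = γ₂ (s₀ y - ι (h y))
      have key : ι (d (γ₃ y)) = γ₂ (s₀ y) - s₀ (γ₃ y) := by
        rw [hd]
        simp [hDdef, LinearMap.sub_apply, LinearMap.comp_apply]
      rw [hhx (γ₃ y)] at key
      simp only [LinearEquiv.symm_apply_apply, map_sub, hιγ] at key
      simp only [LinearMap.comp_apply, LinearMap.sub_apply, LinearEquiv.coe_coe, map_sub]
      -- from key : γ₂ (ι (h y)) - ι (h (γ₃ y)) = γ₂ (s₀ y) - s₀ (γ₃ y)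
      rw [sub_eq_sub_iff_add_eq_add] at key
      rw [sub_eq_sub_iff_add_eq_add, add_comm]
      exact key
end

section
/- Let R be a commutative ring and let 0 → M₁ →^ι M₂ →^π M₃ → 0 be an exact sequence of R-modules equipped with R-linear automorphisms γ₁, γ₂, γ₃ of M₁, M₂, M₃ respectively, satisfying ι ∘ γ₁ = γ₂ ∘ ι and π ∘ γ₂ = γ₃ ∘ π, and assume that π admits an R-linear section. For k = 1, 2 let T_k be the endomorphism f ↦ γ_k ∘ f ∘ γ₃⁻¹ of Hom_R(M₃, M_k) and write Hom_R(M₃, M_k)_γ = Hom_R(M₃, M_k)/im(T_k − id). If the map Hom_R(M₃, M₁)_γ → Hom_R(M₃, M₂)_γ induced by composition with ι is injective, then every R-linear map f : M₃ → M₃ satisfying f ∘ γ₃ = γ₃ ∘ f lifts through π to an R-linear map f̃ : M₃ → M₂ with π ∘ f̃ = f and f̃ ∘ γ₃ = γ₂ ∘ f̃. (This is the key surjectivity claim, obtained by the snake lemma, in the proof of Lemma 4.2 of the paper.) -/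
/-- **(Key surjectivity step in the proof of Lemma 4.2.)** Let
`0 → M₁ →^ι M₂ →^π M₃ → 0` be an exact sequence of `R`-modules equipped with
compatible automorphisms `γ₁, γ₂, γ₃` and assume `π` admits an `R`-linear
section. If the map `Hom_R(M₃, M₁)_γ → Hom_R(M₃, M₂)_γ` on coinvariants
(expressed elementwise: whenever `ι ∘ f` lies in the image of `T₂ − id`,
already `f` lies in the image of `T₁ − id`, where `T_k g = γ_k ∘ g ∘ γ₃⁻¹`)
is injective, then every `R`-linear `f : M₃ → M₃` commuting with `γ₃` lifts
through `π` to an `R`-linear `f̃ : M₃ → M₂` with `π ∘ f̃ = f` and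
`f̃ ∘ γ₃ = γ₂ ∘ f̃`. -/
theorem equivariant_lifting_lemma_4_2
    {R : Type*} [CommRing R]
    {M₁ M₂ M₃ : Type*}
    [AddCommGroup M₁] [AddCommGroup M₂] [AddCommGroup M₃]
    [Module R M₁] [Module R M₂] [Module R M₃]
    (ι : M₁ →ₗ[R] M₂) (π : M₂ →ₗ[R] M₃)
    (γ₁ : M₁ ≃ₗ[R] M₁) (γ₂ : M₂ ≃ₗ[R] M₂) (γ₃ : M₃ ≃ₗ[R] M₃)
    -- exactness of 0 → M₁ → M₂ → M₃ → 0
    (hι : Function.Injective ι)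
    (hexact : LinearMap.range ι = LinearMap.ker π)
    (hπ : Function.Surjective π)
    -- compatibility of the automorphisms
    (hcomm₁ : ι ∘ₗ (γ₁ : M₁ →ₗ[R] M₁) = (γ₂ : M₂ →ₗ[R] M₂) ∘ₗ ι)
    (hcomm₂ : π ∘ₗ (γ₂ : M₂ →ₗ[R] M₂) = (γ₃ : M₃ →ₗ[R] M₃) ∘ₗ π)
    -- π admits an R-linear section
    (hsec : ∃ s : M₃ →ₗ[R] M₂, π ∘ₗ s = LinearMap.id)
    -- injectivity of the induced map on coinvariants, elementwise
    (hinj : ∀ f : M₃ →ₗ[R] M₁,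
        (∃ g : M₃ →ₗ[R] M₂,
          ι ∘ₗ f = (γ₂ : M₂ →ₗ[R] M₂) ∘ₗ g ∘ₗ (γ₃.symm : M₃ →ₗ[R] M₃) - g) →
        (∃ h : M₃ →ₗ[R] M₁,
          f = (γ₁ : M₁ →ₗ[R] M₁) ∘ₗ h ∘ₗ (γ₃.symm : M₃ →ₗ[R] M₃) - h)) :
    ∀ f : M₃ →ₗ[R] M₃,
      f ∘ₗ (γ₃ : M₃ →ₗ[R] M₃) = (γ₃ : M₃ →ₗ[R] M₃) ∘ₗ f →
      ∃ ftilde : M₃ →ₗ[R] M₂,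
        π ∘ₗ ftilde = f ∧
        ftilde ∘ₗ (γ₃ : M₃ →ₗ[R] M₃) = (γ₂ : M₂ →ₗ[R] M₂) ∘ₗ ftilde := by
  intro f hf
  obtain ⟨s, hs⟩ := hsec
  set g : M₃ →ₗ[R] M₂ := s ∘ₗ f with hg
  set d : M₃ →ₗ[R] M₂ :=
    (γ₂ : M₂ →ₗ[R] M₂) ∘ₗ g ∘ₗ (γ₃.symm : M₃ →ₗ[R] M₃) - g with hd
  have hπs : ∀ x, π (s x) = x := fun x => congrArg (fun F => F x) hs
  have hπg : ∀ x, π (g x) = f x := fun x => hπs (f x)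
  have hfc : ∀ x, f (γ₃ x) = γ₃ (f x) := fun x => congrArg (fun F => F x) hf
  have hπγ : ∀ x, π (γ₂ x) = γ₃ (π x) := fun x => congrArg (fun F => F x) hcomm₂
  have hιγ : ∀ x, ι (γ₁ x) = γ₂ (ι x) := fun x => congrArg (fun F => F x) hcomm₁
  have hdker : ∀ x, d x ∈ LinearMap.ker π := by
    intro x
    simp only [hd, LinearMap.sub_apply, LinearMap.coe_comp, Function.comp_apply,
      LinearEquiv.coe_coe, LinearMap.mem_ker, map_sub]
    rw [hπγ, hπg, hπg]
    have := hfc (γ₃.symm x)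
    rw [γ₃.apply_symm_apply] at this
    rw [← this]; exact sub_self _
  have hdrange : ∀ x, d x ∈ LinearMap.range ι := fun x => hexact ▸ hdker x
  set e : M₃ →ₗ[R] M₁ :=
    ((LinearEquiv.ofInjective ι hι).symm : LinearMap.range ι →ₗ[R] M₁) ∘ₗ
      d.codRestrict (LinearMap.range ι) hdrange with he
  have hιe : ι ∘ₗ e = d := by
    ext x
    simp only [he, LinearMap.coe_comp, Function.comp_apply, LinearEquiv.coe_coe,
      LinearMap.codRestrict_apply]
    exact congrArg Subtype.val
      ((LinearEquiv.ofInjective ι hι).apply_symm_apply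
        ((LinearMap.codRestrict (LinearMap.range ι) d hdrange) x))
  obtain ⟨h, hh⟩ := hinj e ⟨g, hιe⟩
  refine ⟨g - ι ∘ₗ h, ?_, ?_⟩
  · ext x
    simp only [LinearMap.coe_comp, Function.comp_apply, LinearMap.sub_apply, map_sub]
    have hk : π (ι (h x)) = 0 := by
      have : ι (h x) ∈ LinearMap.ker π := hexact ▸ LinearMap.mem_range_self ι (h x)
      exact this
    rw [hπg, hk, sub_zero]
  · ext x
    simp only [LinearMap.coe_comp, Function.comp_apply, LinearMap.sub_apply,
      LinearEquiv.coe_coe, map_sub]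
    have hdx := congrArg (fun F => F (γ₃ x)) hιe
    have hhx := congrArg (fun F => F (γ₃ x)) hh
    simp only [hd, LinearMap.coe_comp, Function.comp_apply, LinearMap.sub_apply,
      LinearEquiv.coe_coe, γ₃.symm_apply_apply] at hdx hhx
    rw [hhx] at hdx
    rw [map_sub, hιγ] at hdx
    linear_combination (norm := abel) hdx
end

section
/- Let p be a prime number, let B be an abelian group, let A be a finite abelian p-group, and let ι : A → B be an injective group homomorphism. Then ι admits a group-homomorphism retraction (equivalently, ι(A) is a direct summand of B) if and only if for every m ∈ ℕ the induced homomorphism A/p^m A → B/p^m B is injective. (Lemma 5.1 of the paper; the 'if' direction uses that a pure subgroup of bounded exponent is a direct summand.) -/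
/-!
Take `a ∈ A` of maximal order `p ^ k`, so that `p ^ k` kills `A`. Purity says that `ι a` still has
order `p ^ k` in the `ZMod (p ^ k)`-module `B / p ^ k B`, and since `ZMod (p ^ k)` is
self-injective there is `f : B → ZMod (p ^ k)` with `f (ι a) = 1`. With `g : ZMod (p ^ k) → A`,
`1 ↦ a`, the map `φ = g ∘ f` satisfies `φ ∘ ι ∘ φ = φ`, so `⟨a⟩` splits off: `ι` restricts to a
pure embedding `ker (φ ∘ ι) → ker φ` of a smaller `p`-group, and a retraction `r'` of it gives the
retraction `b ↦ φ b + r' (b - ι (φ b))` of `ι`. Induction on `|A|` finishes the proof.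
-/

namespace ZMod

variable {n : ℕ} [NeZero n]

theorem exists_eq_mul_of_annihilator_le {d e : ZMod n}
    (h : ∀ x : ZMod n, x * d = 0 → x * e = 0) : ∃ c, e = c * d := by
  -- with `g = gcd d.val n`, `n / g` kills `d`, hence `e`, so `g ∣ e`; and `g = d * d⁻¹`
  set g := d.val.gcd n with hg
  have hgn : g ∣ n := Nat.gcd_dvd_right _ _
  have hquot : 0 < n / g :=
    Nat.div_pos (Nat.le_of_dvd (NeZero.pos n) hgn) (Nat.gcd_pos_of_pos_right _ (NeZero.pos n))
  have hkill : ((n / g : ℕ) : ZMod n) * d = 0 := by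
    obtain ⟨t, ht⟩ := Nat.gcd_dvd_left d.val n
    rw [← natCast_zmod_val d, ← Nat.cast_mul, natCast_eq_zero_iff]
    exact ⟨t, by rw [ht, ← hg, ← mul_assoc, Nat.div_mul_cancel hgn]⟩
  obtain ⟨s, hs⟩ : g ∣ e.val := by
    have := h _ hkill
    rw [← natCast_zmod_val e, ← Nat.cast_mul, natCast_eq_zero_iff] at this
    refine Nat.dvd_of_mul_dvd_mul_right hquot ?_
    rwa [Nat.mul_div_cancel' hgn, mul_comm]
  refine ⟨d⁻¹ * s, ?_⟩
  rw [← natCast_zmod_val e, hs, Nat.cast_mul, ← mul_inv_eq_gcd]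
  ring

theorem baer_self : Module.Baer (ZMod n) (ZMod n) := by
  have := IsPrincipalIdealRing.of_surjective (Int.castRingHom (ZMod n)) intCast_surjective
  intro I φ
  obtain ⟨d, rfl⟩ : ∃ d, I = Ideal.span {d} := ⟨_, (Ideal.span_singleton_generator I).symm⟩
  have hd : d ∈ Ideal.span {d} := Ideal.mem_span_singleton_self d
  obtain ⟨c, hc⟩ := exists_eq_mul_of_annihilator_le (d := d) (e := φ ⟨d, hd⟩) fun x hx => by
    rw [← smul_eq_mul, ← map_smul]
    convert φ.map_zero
    exact Subtype.ext hx
  refine ⟨LinearMap.toSpanSingleton _ _ c, fun x hx => ?_⟩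
  obtain ⟨y, rfl⟩ := Ideal.mem_span_singleton'.mp hx
  have : (⟨y * d, hx⟩ : Ideal.span {d}) = y • ⟨d, hd⟩ := rfl
  rw [this, map_smul, hc, LinearMap.toSpanSingleton_apply, smul_eq_mul, smul_eq_mul]
  ring

theorem exists_linearMap_apply_eq_one {M : Type*} [AddCommGroup M] [Module (ZMod n) M] (m : M)
    (hm : ∀ x : ZMod n, x • m = 0 → x = 0) : ∃ f : M →ₗ[ZMod n] ZMod n, f m = 1 := by
  have hinj : Function.Injective (LinearMap.toSpanSingleton (ZMod n) M m) :=
    (injective_iff_map_eq_zero _).mpr hm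
  obtain ⟨f, hf⟩ := baer_self.extension_property _ hinj LinearMap.id
  exact ⟨f, by simpa using LinearMap.congr_fun hf 1⟩

theorem exists_addMonoidHom_apply_eq_one {B : Type*} [AddCommGroup B] (b : B)
    (hb : ∀ z : ℤ, (∃ c : B, z • b = n • c) → (n : ℤ) ∣ z) : ∃ f : B →+ ZMod n, f b = 1 := by
  set nB := (nsmulAddMonoidHom n : B →+ B).range
  have hQ : ∀ q : B ⧸ nB, n • q = 0 := by
    rintro ⟨c⟩
    exact (QuotientAddGroup.eq_zero_iff _).mpr ⟨c, rfl⟩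
  let _ := AddCommGroup.zmodModule hQ
  obtain ⟨f, hf⟩ := exists_linearMap_apply_eq_one (b : B ⧸ nB) fun x hx => by
    obtain ⟨z, rfl⟩ := intCast_surjective x
    rw [Int.cast_smul_eq_zsmul, ← QuotientAddGroup.mk_zsmul, QuotientAddGroup.eq_zero_iff] at hx
    obtain ⟨c, hc⟩ := hx
    exact (intCast_zmod_eq_zero_iff_dvd z n).mpr (hb z ⟨c, hc.symm⟩)
  exact ⟨f.toAddMonoidHom.comp (QuotientAddGroup.mk' nB), hf⟩

end ZMod

theorem exists_addOrderOf_eq_prime_pow_of_finite {A : Type*} [AddCommGroup A] [Finite A]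
    {p : ℕ} (hp : p.Prime) (hA : ∀ a : A, ∃ n : ℕ, p ^ n • a = 0) :
    ∃ (a : A) (k : ℕ), addOrderOf a = p ^ k ∧ ∀ x : A, p ^ k • x = 0 := by
  obtain ⟨a, ha⟩ := AddMonoid.exists_addOrderOf_eq_exponent (G := A) .of_finite
  obtain ⟨N, hN⟩ := hA a
  obtain ⟨k, -, hk⟩ := (Nat.dvd_prime_pow hp).mp (addOrderOf_dvd_of_nsmul_eq_zero hN)
  exact ⟨a, k, hk, fun x => hk ▸ ha ▸ AddMonoid.exponent_nsmul_eq_zero x⟩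

namespace AddMonoidHom

variable {A B : Type*} [AddCommGroup A] [AddCommGroup B]

/-- Purity of `ι` at `p`: every induced map `A/p^m A → B/p^m B` is injective. -/
def IsPPure (p : ℕ) (ι : A →+ B) : Prop :=
  ∀ (m : ℕ) (a : A), (∃ b : B, ι a = p ^ m • b) → ∃ a' : A, a = p ^ m • a'

variable {p : ℕ} {ι : A →+ B}

theorem isPPure_of_comp_eq_id {r : B →+ A} (hr : r.comp ι = .id A) : ι.IsPPure p := by
  rintro m a ⟨b, hb⟩
  refine ⟨r b, ?_⟩
  rw [← map_nsmul, ← hb, ← comp_apply, hr, id_apply]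

theorem IsPPure.addSubgroupComap {φ : B →+ A} (hι : ι.IsPPure p)
    (hφ : ∀ b, φ (ι (φ b)) = φ b) : (ι.addSubgroupComap φ.ker).IsPPure p := by
  rintro m x ⟨c, hc⟩
  obtain ⟨y, hy⟩ := hι m x ⟨c, congrArg Subtype.val hc⟩
  have hφy : φ (ι (y - φ (ι y))) = 0 := by
    rw [map_sub, map_sub, hφ, sub_self]
  refine ⟨⟨y - φ (ι y), hφy⟩, Subtype.ext ?_⟩
  have hx : φ (ι x) = 0 := x.2
  simp only [AddSubgroup.coe_nsmul, smul_sub, ← map_nsmul, ← hy, hx, sub_zero]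

theorem exists_comp_eq_id_of_addSubgroupComap {φ : B →+ A} (hφ : ∀ b, φ (ι (φ b)) = φ b)
    {r' : φ.ker →+ φ.ker.comap ι} (hr' : r'.comp (ι.addSubgroupComap φ.ker) = .id _) :
    ∃ r : B →+ A, r.comp ι = .id A := by
  have hproj : ∀ b, b - ι (φ b) ∈ φ.ker := fun b => by
    rw [mem_ker, map_sub, hφ, sub_self]
  let proj : B →+ φ.ker := (AddMonoidHom.id B - ι.comp φ).codRestrict φ.ker hproj
  refine ⟨φ + (φ.ker.comap ι).subtype.comp (r'.comp proj), ext fun x => ?_⟩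
  have hx : φ (ι (x - φ (ι x))) = 0 := by
    rw [map_sub, map_sub, hφ, sub_self]
  have : proj (ι x) = ι.addSubgroupComap φ.ker ⟨x - φ (ι x), hx⟩ :=
    Subtype.ext (map_sub ι _ _).symm
  simp [this, ← comp_apply r', hr']

theorem IsPPure.exists_splitting (hp : p.Prime) [Finite A] [Nontrivial A]
    (hA : ∀ a : A, ∃ n : ℕ, p ^ n • a = 0) (hι : ι.IsPPure p) :
    ∃ φ : B →+ A, (∀ b, φ (ι (φ b)) = φ b) ∧ ∃ a, φ (ι a) ≠ 0 := by
  obtain ⟨a, k, ha, hexp⟩ := exists_addOrderOf_eq_prime_pow_of_finite hp hA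
  have : NeZero (p ^ k) := ⟨pow_ne_zero _ hp.ne_zero⟩
  obtain ⟨f, hf⟩ := ZMod.exists_addMonoidHom_apply_eq_one (n := p ^ k) (ι a) fun z ⟨c, hc⟩ => by
    obtain ⟨a', ha'⟩ := hι k (z • a) ⟨c, by rw [map_zsmul, hc]⟩
    rw [← ha, addOrderOf_dvd_iff_zsmul_eq_zero, ha', hexp]
  let g : ZMod (p ^ k) →+ A :=
    ZMod.lift (p ^ k) ⟨zmultiplesHom A a, by rw [zmultiplesHom_apply, natCast_zsmul, hexp]⟩
  have hg : ∀ z : ℤ, g z = z • a := ZMod.lift_coe _ _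
  have hfg : ∀ x, f (ι (g x)) = x := fun x => by
    obtain ⟨z, rfl⟩ := ZMod.intCast_surjective x
    rw [hg, map_zsmul, map_zsmul, hf, zsmul_one]
  refine ⟨g.comp f, fun b => by simp only [comp_apply, hfg], a, fun h => ?_⟩
  obtain ⟨x, hx⟩ := exists_ne (0 : A)
  rw [comp_apply, hf, ← Int.cast_one, hg, one_zsmul] at h
  rw [h, addOrderOf_zero] at ha
  exact hx (by simpa [← ha] using hexp x)

theorem IsPPure.exists_comp_eq_id (hp : p.Prime) [Finite A]
    (hA : ∀ a : A, ∃ n : ℕ, p ^ n • a = 0) (hι : ι.IsPPure p) :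
    ∃ r : B →+ A, r.comp ι = .id A := by
  induction hN : Nat.card A using Nat.strong_induction_on generalizing A B with
  | _ N ih =>
  cases subsingleton_or_nontrivial A with
  | inl _ => exact ⟨0, ext fun x => Subsingleton.elim _ _⟩
  | inr _ =>
    obtain ⟨φ, hφ, a, ha⟩ := hι.exists_splitting hp hA
    obtain ⟨r', hr'⟩ := ih _ ((Finite.card_subtype_lt (p := (· ∈ φ.ker.comap ι)) ha).trans_eq hN)
      (A := φ.ker.comap ι) (fun x => (hA x).imp fun n hn => Subtype.ext hn)
      (hι.addSubgroupComap hφ) rfl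
    exact exists_comp_eq_id_of_addSubgroupComap hφ hr'

end AddMonoidHom

theorem retraction_iff_purity_lemma_5_1_general
    (p : ℕ) (hp : p.Prime)
    {A B : Type*} [AddCommGroup A] [AddCommGroup B]
    [Finite A] (hA : ∀ a : A, ∃ n : ℕ, p ^ n • a = 0)
    (ι : A →+ B) :
    (∃ r : B →+ A, r.comp ι = AddMonoidHom.id A) ↔
    (∀ m : ℕ, ∀ a : A, (∃ b : B, ι a = p ^ m • b) → ∃ a' : A, a = p ^ m • a') :=
  ⟨fun ⟨_, hr⟩ => AddMonoidHom.isPPure_of_comp_eq_id hr,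
    AddMonoidHom.IsPPure.exists_comp_eq_id hp hA⟩

/-- **Lemma 5.1.** Let `p` be a prime, `B` an abelian group, `A` a finite abelian
`p`-group and `ι : A → B` an injective homomorphism. Then `ι` admits a
group-homomorphism retraction if and only if for every `m ∈ ℕ` the induced map
`A/p^m A → B/p^m B` is injective (expressed elementwise: if `ι a ∈ p^m B` then
`a ∈ p^m A`). -/
theorem retraction_iff_purity_lemma_5_1
    (p : ℕ) (hp : p.Prime)
    {A B : Type*} [AddCommGroup A] [AddCommGroup B]
    [Finite A] (hA : ∀ a : A, ∃ n : ℕ, p ^ n • a = 0)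
    (ι : A →+ B) (hι : Function.Injective ι) :
    (∃ r : B →+ A, r.comp ι = AddMonoidHom.id A) ↔
    (∀ m : ℕ, ∀ a : A, (∃ b : B, ι a = p ^ m • b) → ∃ a' : A, a = p ^ m • a') :=
  retraction_iff_purity_lemma_5_1_general p hp hA ι
end

section
/- Let p be a prime, ℤ_p the ring of p-adic integers, and Λ = ℤ_p[[X]] the ring of formal power series (the Iwasawa algebra). For each n ∈ ℕ set ω_n = (1+X)^{p^n} − 1 ∈ Λ. Let M be a finitely generated Λ-module and let t_Λ(M) denote its Λ-torsion submodule. Assume that for every n ∈ ℕ the quotient t_Λ(M)/ω_n·t_Λ(M) is finite. Then the natural maps M → M/ω_n M induce an isomorphism of Λ-modules t_Λ(M) ≅ lim_n t_{ℤ_p}(M/ω_n M), where t_{ℤ_p}(M/ω_n M) denotes the ℤ_p-torsion submodule of M/ω_n M and the inverse limit is taken over the natural projections M/ω_{n+1} M → M/ω_n M. (Lemma 3.3 of the paper, with Γ_n-coinvariants written explicitly as quotients by ω_n.) -/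
open PowerSeries

noncomputable section

/-- The Iwasawa algebra `Λ = ℤ_p[[X]]`. -/
abbrev IwasawaAlgebra (p : ℕ) [Fact p.Prime] : Type := PowerSeries ℤ_[p]

/-- `ω_n = (1+X)^{p^n} − 1 ∈ Λ`. -/
def omegaN (p : ℕ) [Fact p.Prime] (n : ℕ) : IwasawaAlgebra p :=
  (1 + PowerSeries.X) ^ (p ^ n) - 1

/-- `ω_n` divides `ω_{n+1}`. -/
theorem omegaN_dvd_succ (p : ℕ) [Fact p.Prime] (n : ℕ) :
    omegaN p n ∣ omegaN p (n + 1) := by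
  have h1 : omegaN p (n + 1) =
      ((1 + PowerSeries.X : IwasawaAlgebra p) ^ (p ^ n)) ^ p - 1 ^ p := by
    rw [one_pow, omegaN, ← pow_mul, pow_succ]
  rw [omegaN, h1]
  exact sub_dvd_pow_sub_pow _ _ p

variable (p : ℕ) [Fact p.Prime] (M : Type*) [AddCommGroup M]
  [Module (IwasawaAlgebra p) M]

/-- The submodule `ω_n M` of `M`. -/
def omegaSub (n : ℕ) : Submodule (IwasawaAlgebra p) M :=
  Ideal.span {omegaN p n} • (⊤ : Submodule (IwasawaAlgebra p) M)

/-- The `ℤ_p`-torsion submodule of a `Λ`-module `N`: elements annihilated by some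
nonzero element of `ℤ_p` (viewed inside `Λ` via the constants). -/
def torsionZp (N : Type*) [AddCommGroup N] [Module (IwasawaAlgebra p) N] :
    Submodule (IwasawaAlgebra p) N where
  carrier := {x | ∃ a : ℤ_[p], a ≠ 0 ∧ ((PowerSeries.C : ℤ_[p] →+* PowerSeries ℤ_[p]) a) • x = 0}
  zero_mem' := ⟨1, one_ne_zero, smul_zero _⟩
  add_mem' := by
    rintro x y ⟨a, ha, hax⟩ ⟨b, hb, hby⟩
    refine ⟨a * b, mul_ne_zero ha hb, ?_⟩
    have h1 : ((PowerSeries.C : ℤ_[p] →+* PowerSeries ℤ_[p]) a * (PowerSeries.C : ℤ_[p] →+* PowerSeries ℤ_[p]) b) • x = 0 := by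
      rw [mul_comm, mul_smul, hax, smul_zero]
    have h2 : ((PowerSeries.C : ℤ_[p] →+* PowerSeries ℤ_[p]) a * (PowerSeries.C : ℤ_[p] →+* PowerSeries ℤ_[p]) b) • y = 0 := by
      rw [mul_smul, hby, smul_zero]
    rw [map_mul, smul_add, h1, h2, add_zero]
  smul_mem' := by
    rintro r x ⟨a, ha, hax⟩
    refine ⟨a, ha, ?_⟩
    rw [smul_smul, mul_comm, ← smul_smul, hax, smul_zero]

/-- The natural projection `M/ω_{n+1}M → M/ω_n M`. -/
def projN (n : ℕ) :
    (M ⧸ omegaSub p M (n + 1)) →ₗ[IwasawaAlgebra p] (M ⧸ omegaSub p M n) :=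
  Submodule.mapQ _ _ LinearMap.id (by
    rw [Submodule.comap_id]
    apply Submodule.smul_mono_left
    rw [Ideal.span_singleton_le_span_singleton]
    exact omegaN_dvd_succ p n)

/-- The inverse limit `lim_n t_{ℤ_p}(M/ω_n M)` of the `ℤ_p`-torsion submodules of the
quotients `M/ω_n M`, taken along the natural projections, realized as the
`Λ`-submodule of compatible families in the product. -/
def limTorsionZp :
    Submodule (IwasawaAlgebra p) (Π n : ℕ, torsionZp p (M ⧸ omegaSub p M n)) where
  carrier := {x | ∀ n : ℕ,
    projN p M n ((x (n + 1) : M ⧸ omegaSub p M (n + 1))) =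
      (x n : M ⧸ omegaSub p M n)}
  zero_mem' := by intro n; simp
  add_mem' := by
    intro x y hx hy n
    simp only [Pi.add_apply, Submodule.coe_add, map_add, hx n, hy n]
  smul_mem' := by
    intro r x hx n
    simp only [Pi.smul_apply, Submodule.coe_smul, map_smul, hx n]

/-!
The map `t_Λ(M) → lim t_{ℤ_p}(M/ω_n M)` is well defined because the image of `t_Λ(M)` in
`M/ω_n M` is a quotient of the finite module `t_Λ(M)/ω_n t_Λ(M)`, and it is injective by
Krull's intersection theorem, as `ω_n` lies in `𝔪^{n+1}` for the maximal ideal `𝔪 = (p, X)` of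
the Noetherian local ring `Λ`.

For surjectivity, lift a compatible family to `m_n ∈ M` and write `m_{n+1} - m_n = ω_n u_n`.
Since `ω_{n+1} = ω_n ρ_n` with `ρ_n ∈ 𝔪`, the recursion `e_n = u_n + ρ_n e_{n+1}` is solved by
`e_n = ∑_k ρ_n ⋯ ρ_{n+k-1} u_{n+k}` (in coordinates; the `k`-th term lies in `𝔪^k`, so the sum
converges coefficientwise in `ℤ_p⟦X⟧`), and `L = m_0 + ω_0 e_0` satisfies `L - m_n = ω_n e_n`.
This `L` is `Λ`-torsion: otherwise some functional `θ : M/t_Λ(M) → Λ` has `θ(L) ≠ 0`, and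
`θ(L)` is divisible by every `ω_n` because `Λ/ω_n` has no `p`-torsion (`p` is prime in `Λ` and
does not divide `ω_n`), so `θ(L) = 0` by Krull again.
-/

theorem dvd_of_dvd_prime_pow_mul {R : Type*} [CommMonoidWithZero R] [IsCancelMulZero R]
    {q a b : R} (hq : Prime q) (ha : ¬q ∣ a) {k : ℕ} (h : a ∣ q ^ k * b) : a ∣ b := by
  induction k generalizing b with
  | zero => simpa using h
  | succ k ih =>
    obtain ⟨c, hc⟩ := h
    have hqc : q ∣ a * c := ⟨q ^ k * b, by rw [← hc, pow_succ', mul_assoc]⟩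
    obtain ⟨d, rfl⟩ := (hq.dvd_or_dvd hqc).resolve_left ha
    exact ih ⟨d, mul_left_cancel₀ hq.ne_zero (by rw [← mul_assoc, ← pow_succ', hc, mul_left_comm])⟩

open scoped nonZeroDivisors in
theorem Module.exists_linearMap_apply_ne_zero {R N : Type*} [CommRing R] [IsDomain R]
    [AddCommGroup N] [Module R N] [Module.Finite R N] [Module.IsTorsionFree R N] {x : N}
    (hx : x ≠ 0) : ∃ θ : N →ₗ[R] R, θ x ≠ 0 := by
  -- separate `x` by a functional on `N ⊗ Frac R`, then clear the denominators of its f.g. image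
  let K := FractionRing R
  let j := LocalizedModule.mkLinearMap R⁰ N
  have hj : j x ≠ 0 := by
    rw [Ne, IsLocalizedModule.eq_zero_iff R⁰]
    rintro ⟨s, hs⟩
    exact hx ((smul_eq_zero_iff_right (nonZeroDivisors.coe_ne_zero s)).mp hs)
  obtain ⟨φ, hφ⟩ : ∃ φ : Module.Dual K (LocalizedModule R⁰ N), φ (j x) ≠ 0 := by
    by_contra! h
    exact hj ((Module.forall_dual_apply_eq_zero_iff K _).mp h)
  let ψ : N →ₗ[R] K := φ.restrictScalars R ∘ₗ j
  obtain ⟨d, hd, hdψ⟩ := FractionalIdeal.isFractional_of_fg (S := R⁰)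
    ((Module.Finite.fg_top (R := R) (M := N)).map ψ)
  let ι := LinearEquiv.ofInjective (Algebra.linearMap R K) (IsFractionRing.injective R K)
  have hint (y : N) : (d • ψ) y ∈ LinearMap.range (Algebra.linearMap R K) :=
    hdψ _ (Submodule.mem_map_of_mem trivial)
  refine ⟨ι.symm ∘ₗ (d • ψ).codRestrict _ hint, ?_⟩
  rw [LinearMap.comp_apply, LinearEquiv.coe_coe, LinearEquiv.map_ne_zero_iff, Ne,
    ← Subtype.coe_inj, LinearMap.codRestrict_apply]
  simpa [ψ, Algebra.smul_def, nonZeroDivisors.coe_ne_zero ⟨d, hd⟩] using hφ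

def idealPX : Ideal (IwasawaAlgebra p) := Ideal.span {(p : IwasawaAlgebra p), X}

def omegaQuot (n : ℕ) : IwasawaAlgebra p :=
  ∑ i ∈ Finset.range p, ((1 + X : IwasawaAlgebra p) ^ p ^ n) ^ i

section Omega

variable {p}

theorem idealPX_le_maximalIdeal : idealPX p ≤ IsLocalRing.maximalIdeal _ := by
  rw [idealPX, Ideal.span_le]
  rintro f (rfl | rfl) <;> rw [SetLike.mem_coe, IsLocalRing.mem_maximalIdeal, mem_nonunits_iff,
    isUnit_iff_constantCoeff]
  · rw [map_natCast]
    exact PadicInt.p_nonunit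
  · simp

theorem omegaN_succ (n : ℕ) : omegaN p (n + 1) = omegaN p n * omegaQuot p n := by
  rw [omegaN, omegaN, omegaQuot, mul_geom_sum, ← pow_mul, ← pow_succ]

theorem omegaN_mem_idealPX (n : ℕ) : omegaN p n ∈ idealPX p := by
  obtain ⟨f, hf⟩ : X ∣ omegaN p n := X_dvd_iff.mpr (by simp [omegaN])
  rw [hf]
  exact Ideal.mul_mem_right _ _ (Ideal.subset_span (by simp))

theorem omegaQuot_mem_idealPX (n : ℕ) : omegaQuot p n ∈ idealPX p := by
  have h1 : Ideal.Quotient.mk (idealPX p) ((1 + X : IwasawaAlgebra p) ^ p ^ n) = 1 := by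
    rw [← map_one (Ideal.Quotient.mk _), Ideal.Quotient.eq]
    exact omegaN_mem_idealPX n
  rw [← Ideal.Quotient.eq_zero_iff_mem, omegaQuot, map_sum]
  simp only [map_pow, h1, one_pow, Finset.sum_const, Finset.card_range, nsmul_one]
  rw [← map_natCast (Ideal.Quotient.mk _), Ideal.Quotient.eq_zero_iff_mem]
  exact Ideal.subset_span (by simp)

theorem omegaN_mem_idealPX_pow (n : ℕ) : omegaN p n ∈ idealPX p ^ (n + 1) := by
  induction n with
  | zero => simpa using omegaN_mem_idealPX 0
  | succ n ih => rw [omegaN_succ, pow_succ]; exact Ideal.mul_mem_mul ih (omegaQuot_mem_idealPX n)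

end Omega

section Completeness

variable {p}

open Filter Topology PowerSeries.WithPiTopology

theorem coeff_mem_span_pow_of_mem_idealPX_pow {f : IwasawaAlgebra p} {k j : ℕ}
    (hf : f ∈ idealPX p ^ (k + (j + 1))) : coeff j f ∈ Ideal.span {(p : ℤ_[p]) ^ k} := by
  -- `(p, X) ^ (k + (j + 1)) ≤ (p ^ k) + (X ^ (j + 1))`
  rw [idealPX, Ideal.span_insert] at hf
  obtain ⟨a, ha, b, hb, rfl⟩ := Submodule.mem_sup.mp (Ideal.sup_pow_add_le_pow_sup_pow hf)
  rw [Ideal.span_singleton_pow, Ideal.mem_span_singleton] at ha hb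
  obtain ⟨a, rfl⟩ := ha
  rw [map_add, X_pow_dvd_iff.mp hb j (by omega), add_zero, ← map_natCast C, ← map_pow,
    coeff_C_mul]
  exact Ideal.mul_mem_right _ _ (Ideal.mem_span_singleton_self _)

theorem summable_of_mem_idealPX_pow {F : ℕ → IwasawaAlgebra p} (hF : ∀ k, F k ∈ idealPX p ^ k) :
    Summable F := by
  rw [summable_iff_summable_coeff]
  intro j
  apply NonarchimedeanAddGroup.summable_of_tendsto_cofinite_zero
  rw [Nat.cofinite_eq_atTop, ← tendsto_add_atTop_iff_nat (j + 1)]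
  have hp : (1 : ℝ) < p := by exact_mod_cast (Fact.out : p.Prime).one_lt
  refine squeeze_zero_norm (fun k => ?_) (tendsto_pow_atTop_nhds_zero_of_lt_one
    (inv_nonneg.mpr (by positivity)) (inv_lt_one_of_one_lt₀ hp))
  rw [inv_pow, ← zpow_natCast, ← zpow_neg, PadicInt.norm_le_pow_iff_mem_span_pow]
  exact coeff_mem_span_pow_of_mem_idealPX_pow (hF _)

theorem exists_eq_add_mul_succ {ρ : ℕ → IwasawaAlgebra p} (hρ : ∀ n, ρ n ∈ idealPX p)
    (c : ℕ → IwasawaAlgebra p) : ∃ e : ℕ → IwasawaAlgebra p, ∀ n, e n = c n + ρ n * e (n + 1) := by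
  let F (n k : ℕ) := (∏ i ∈ Finset.range k, ρ (n + i)) * c (n + k)
  have hF (n : ℕ) : Summable (F n) := summable_of_mem_idealPX_pow fun k =>
    Ideal.mul_mem_right _ _ (by
      simpa using Ideal.prod_mem_prod (s := Finset.range k) (I := fun _ => idealPX p)
        fun i _ => hρ (n + i))
  refine ⟨fun n => ∑' k, F n k, fun n => ?_⟩
  dsimp only
  rw [(hF n).tsum_eq_zero_add, ← (hF (n + 1)).tsum_mul_left]
  congr 1
  · simp [F]
  · refine tsum_congr fun k => ?_
    simp only [F, Finset.prod_range_succ', add_zero, add_assoc, add_comm 1]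
    ring

end Completeness

section Modules

variable {p M}

theorem mem_omegaSub_iff {n : ℕ} {x : M} : x ∈ omegaSub p M n ↔ ∃ y, omegaN p n • y = x := by
  simp [omegaSub, Submodule.ideal_span_singleton_smul, Submodule.mem_smul_pointwise_iff_exists]

theorem exists_eq_add_smul_succ [Module.Finite (IwasawaAlgebra p) M] {ρ : ℕ → IwasawaAlgebra p}
    (hρ : ∀ n, ρ n ∈ idealPX p) (u : ℕ → M) : ∃ e : ℕ → M, ∀ n, e n = u n + ρ n • e (n + 1) := by
  obtain ⟨r, f, hf⟩ := Module.Finite.exists_fin' (IwasawaAlgebra p) M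
  choose v hv using fun n => hf (u n)
  choose e he using fun i : Fin r => exists_eq_add_mul_succ hρ fun n => v n i
  refine ⟨fun n => f fun i => e i n, fun n => ?_⟩
  have : (fun i => e i n) = v n + ρ n • fun i => e i (n + 1) := funext fun i => he i n
  simp only [this, map_add, map_smul, hv]

theorem exists_forall_sub_mem_omegaSub [Module.Finite (IwasawaAlgebra p) M] {m : ℕ → M}
    (hm : ∀ n, m (n + 1) - m n ∈ omegaSub p M n) : ∃ L, ∀ n, L - m n ∈ omegaSub p M n := by
  choose u hu using fun n => (mem_omegaSub_iff (p := p)).mp (hm n)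
  obtain ⟨e, he⟩ := exists_eq_add_smul_succ (omegaQuot_mem_idealPX (p := p)) u
  have key (n : ℕ) : m 0 + omegaN p 0 • e 0 - m n = omegaN p n • e n := by
    induction n with
    | zero => abel
    | succ n ih =>
      rw [← sub_sub_sub_cancel_right _ _ (m n), ih, ← hu, he n, omegaN_succ, mul_smul]
      simp [smul_add]
  exact ⟨_, fun n => mem_omegaSub_iff.mpr ⟨e n, (key n).symm⟩⟩

end Modules

section Krull

variable {p M}

theorem omegaSub_le_maximalIdeal_pow_smul (n : ℕ) :
    omegaSub p M n ≤ (IsLocalRing.maximalIdeal (IwasawaAlgebra p)) ^ n • ⊤ := by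
  refine Submodule.smul_mono_left (Ideal.span_le.mpr ?_)
  rw [Set.singleton_subset_iff]
  exact pow_le_pow_left' idealPX_le_maximalIdeal n
    (Ideal.pow_le_pow_right n.le_succ (omegaN_mem_idealPX_pow n))

theorem eq_zero_of_forall_mem_omegaSub [Module.Finite (IwasawaAlgebra p) M] {x : M}
    (h : ∀ n, x ∈ omegaSub p M n) : x = 0 :=
  IsHausdorff.haus inferInstance x fun n =>
    SModEq.zero.mpr (omegaSub_le_maximalIdeal_pow_smul n (h n))

theorem eq_zero_of_forall_omegaN_dvd {g : IwasawaAlgebra p} (h : ∀ n, omegaN p n ∣ g) : g = 0 :=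
  eq_zero_of_forall_mem_omegaSub fun n =>
    let ⟨c, hc⟩ := h n
    (mem_omegaSub_iff (p := p)).mpr ⟨c, hc.symm⟩

end Krull

section TorsionZp

variable {p}

theorem mem_torsionZp_of_finite {N : Type*} [AddCommGroup N] [Module (IwasawaAlgebra p) N]
    [Finite N] (x : N) : x ∈ torsionZp p N :=
  ⟨Nat.card N, Nat.cast_ne_zero.mpr Nat.card_pos.ne', by
    rw [map_natCast, Nat.cast_smul_eq_nsmul, card_nsmul_eq_zero']⟩

theorem LinearMap.map_mem_torsionZp {N N' : Type*} [AddCommGroup N] [Module (IwasawaAlgebra p) N]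
    [AddCommGroup N'] [Module (IwasawaAlgebra p) N'] (f : N →ₗ[IwasawaAlgebra p] N') {x : N}
    (hx : x ∈ torsionZp p N) : f x ∈ torsionZp p N' :=
  let ⟨a, ha, hax⟩ := hx
  ⟨a, ha, by rw [← map_smul, hax, map_zero]⟩

variable {M}

theorem mk_mem_torsionZp_of_finite {n : ℕ} (N : Submodule (IwasawaAlgebra p) M)
    (hN : Finite (N ⧸ omegaSub p N n)) {x : M} (hx : x ∈ N) :
    Submodule.Quotient.mk x ∈ torsionZp p (M ⧸ omegaSub p M n) := by
  have hle : omegaSub p N n ≤ (omegaSub p M n).comap N.subtype := by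
    rw [← Submodule.map_le_iff_le_comap, omegaSub, Submodule.map_smul'']
    exact Submodule.smul_mono le_rfl le_top
  exact (Submodule.mapQ _ _ N.subtype hle).map_mem_torsionZp
    (mem_torsionZp_of_finite (Submodule.Quotient.mk ⟨x, hx⟩))

end TorsionZp

section Prime

variable {p}

theorem map_toZMod_eq_zero_iff (f : IwasawaAlgebra p) :
    PowerSeries.map (PadicInt.toZMod (p := p)) f = 0 ↔ (p : IwasawaAlgebra p) ∣ f := by
  have hcoeff (a : ℤ_[p]) : PadicInt.toZMod a = 0 ↔ (p : ℤ_[p]) ∣ a := by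
    rw [← RingHom.mem_ker, PadicInt.ker_toZMod, PadicInt.maximalIdeal_eq_span_p,
      Ideal.mem_span_singleton]
  simp only [PowerSeries.ext_iff, coeff_map, map_zero, hcoeff]
  constructor
  · intro h
    choose c hc using h
    exact ⟨mk c, by ext j; rw [← map_natCast C, coeff_C_mul, coeff_mk, hc]⟩
  · rintro ⟨g, rfl⟩ j
    rw [← map_natCast C, coeff_C_mul]
    exact dvd_mul_right _ _

theorem prime_natCast_iwasawaAlgebra : Prime (p : IwasawaAlgebra p) := by
  have hker : Ideal.span {(p : IwasawaAlgebra p)} =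
      RingHom.ker (PowerSeries.map (PadicInt.toZMod (p := p))) := by
    ext f
    rw [Ideal.mem_span_singleton, RingHom.mem_ker, map_toZMod_eq_zero_iff]
  have hp : (p : IwasawaAlgebra p) ≠ 0 := by
    rw [← map_natCast C]
    exact (map_ne_zero_iff _ C_injective).mpr (Nat.cast_ne_zero.mpr (Fact.out : p.Prime).ne_zero)
  exact (Ideal.span_singleton_prime hp).mp (hker ▸ RingHom.ker_isPrime _)

theorem not_natCast_dvd_omegaN (n : ℕ) : ¬(p : IwasawaAlgebra p) ∣ omegaN p n := by
  have : CharP (ZMod p)⟦X⟧ p := charP_of_injective_ringHom C_injective p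
  rw [← map_toZMod_eq_zero_iff, omegaN, map_sub, map_pow, map_add, map_one, map_X,
    add_pow_char_pow, one_pow, add_sub_cancel_left]
  exact pow_ne_zero _ X_ne_zero

theorem omegaN_dvd_of_dvd_C_mul {n : ℕ} {a : ℤ_[p]} (ha : a ≠ 0) {g : IwasawaAlgebra p}
    (h : omegaN p n ∣ C a * g) : omegaN p n ∣ g := by
  rw [PadicInt.unitCoeff_spec ha, map_mul, map_pow, map_natCast, mul_assoc,
    ((PadicInt.unitCoeff ha).isUnit.map C).dvd_mul_left] at h
  exact dvd_of_dvd_prime_pow_mul prime_natCast_iwasawaAlgebra (not_natCast_dvd_omegaN n) h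

end Prime

section Torsion

variable {p M}

theorem mem_torsion_of_forall_mk_mem_torsionZp [Module.Finite (IwasawaAlgebra p) M] {x : M}
    (h : ∀ n, Submodule.Quotient.mk x ∈ torsionZp p (M ⧸ omegaSub p M n)) :
    x ∈ Submodule.torsion (IwasawaAlgebra p) M := by
  by_contra hx
  obtain ⟨θ, hθ⟩ := Module.exists_linearMap_apply_ne_zero (R := IwasawaAlgebra p)
    (x := Submodule.Quotient.mk (p := Submodule.torsion (IwasawaAlgebra p) M) x)
    (by rwa [Ne, Submodule.Quotient.mk_eq_zero])
  refine hθ (eq_zero_of_forall_omegaN_dvd fun n => ?_)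
  obtain ⟨a, ha, hax⟩ := h n
  obtain ⟨y, hy⟩ := mem_omegaSub_iff.mp
    ((Submodule.Quotient.mk_eq_zero _).mp ((Submodule.Quotient.mk_smul _ _ _).trans hax))
  refine omegaN_dvd_of_dvd_C_mul ha ⟨θ (Submodule.Quotient.mk y), ?_⟩
  rw [← smul_eq_mul, ← smul_eq_mul, ← map_smul, ← map_smul, ← Submodule.Quotient.mk_smul,
    ← Submodule.Quotient.mk_smul, hy]

end Torsion

section Limit

variable {p M}

def torsionToLimTorsionZp
    (hfin : ∀ n, Finite (Submodule.torsion (IwasawaAlgebra p) M ⧸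
      omegaSub p (Submodule.torsion (IwasawaAlgebra p) M) n)) :
    Submodule.torsion (IwasawaAlgebra p) M →ₗ[IwasawaAlgebra p] limTorsionZp p M :=
  (LinearMap.pi fun n =>
    ((omegaSub p M n).mkQ ∘ₗ (Submodule.torsion (IwasawaAlgebra p) M).subtype).codRestrict _
      fun x => mk_mem_torsionZp_of_finite _ (hfin n) x.2).codRestrict _ fun _ _ => rfl

variable [Module.Finite (IwasawaAlgebra p) M]
  (hfin : ∀ n, Finite (Submodule.torsion (IwasawaAlgebra p) M ⧸
    omegaSub p (Submodule.torsion (IwasawaAlgebra p) M) n))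

theorem torsionToLimTorsionZp_injective : Function.Injective (torsionToLimTorsionZp hfin) := by
  refine (injective_iff_map_eq_zero _).mpr fun x hx => Subtype.ext ?_
  refine eq_zero_of_forall_mem_omegaSub (p := p) fun n => ?_
  exact (Submodule.Quotient.mk_eq_zero _).mp congr((($hx).1 n).1)

theorem torsionToLimTorsionZp_surjective : Function.Surjective (torsionToLimTorsionZp hfin) := by
  rintro ⟨y, hy⟩
  choose m hm using fun n => Submodule.Quotient.mk_surjective _ (y n : M ⧸ omegaSub p M n)
  obtain ⟨L, hL⟩ := exists_forall_sub_mem_omegaSub (p := p) (m := m) fun n => by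
    rw [← Submodule.Quotient.eq, hm n, ← hy n, ← hm (n + 1)]
    rfl
  have hLy (n : ℕ) : Submodule.Quotient.mk L = (y n : M ⧸ omegaSub p M n) := by
    rw [← hm n]
    exact (Submodule.Quotient.eq _).mpr (hL n)
  refine ⟨⟨L, mem_torsion_of_forall_mk_mem_torsionZp fun n => hLy n ▸ (y n).2⟩, ?_⟩
  exact Subtype.ext (funext fun n => Subtype.ext (hLy n))

end Limit

/-- **Lemma 3.3.** Let `M` be a finitely generated `Λ`-module such that
`t_Λ(M)/ω_n·t_Λ(M)` is finite for every `n`. Then the natural maps `M → M/ω_n M`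
induce an isomorphism of `Λ`-modules `t_Λ(M) ≅ lim_n t_{ℤ_p}(M/ω_n M)`. -/
theorem torsion_iso_limit_torsion
    [Module.Finite (IwasawaAlgebra p) M]
    (hfin : ∀ n : ℕ, Finite
      ((Submodule.torsion (IwasawaAlgebra p) M) ⧸
        (Ideal.span {omegaN p n} • (⊤ : Submodule (IwasawaAlgebra p)
          (Submodule.torsion (IwasawaAlgebra p) M))))) :
    ∃ e : Submodule.torsion (IwasawaAlgebra p) M ≃ₗ[IwasawaAlgebra p]
        limTorsionZp p M,
      ∀ (x : Submodule.torsion (IwasawaAlgebra p) M) (n : ℕ),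
        (((e x : Π n : ℕ, torsionZp p (M ⧸ omegaSub p M n)) n :
            torsionZp p (M ⧸ omegaSub p M n)) : M ⧸ omegaSub p M n) =
          Submodule.Quotient.mk (x : M) :=
  ⟨LinearEquiv.ofBijective _ ⟨torsionToLimTorsionZp_injective hfin,
    torsionToLimTorsionZp_surjective hfin⟩, fun _ _ => rfl⟩
end
end
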